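/- arXiv:2302.13101 — 5 statements merged into one kernel-verified Lean document; each statement's English description precedes it below -/
import Mathlib

section
/- Let R be a commutative ring in which 2 = 0, let s,t,u,v ∈ R, and set a = s², b = t², c = u², d = v². Let F(x,y,z,w) be the determinant of the 4×4 matrix with rows (a·y·z·w, x, 1, a), (b·x·z·w, y, 1, b), (c·x·y·w, z, 1, c), (d·x·y·z, w, 1, d). Then F(s,t,u,v) = 0 and all four formal partial derivatives of F vanish at (s,t,u,v). -/
open MvPolynomial

/-- The Hutchinson equation of the Weddle quartic surface, as a polynomial in the
four variables `X 0 = x, X 1 = y, X 2 = z, X 3 = w`. -/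
noncomputable def weddlePoly (R : Type*) [CommRing R] (a b c d : R) : MvPolynomial (Fin 4) R :=
  Matrix.det !![C a * X 1 * X 2 * X 3, X 0, 1, C a;
                C b * X 0 * X 2 * X 3, X 1, 1, C b;
                C c * X 0 * X 1 * X 3, X 2, 1, C c;
                C d * X 0 * X 1 * X 2, X 3, 1, C d]

set_option maxHeartbeats 1600000 in
lemma weddlePoly_eq (R : Type*) [CommRing R] (a b c d : R) :
    weddlePoly R a b c d =
      - C c*C d*X 0*(X 1*X 1)*X 3 + C c*C d*X 0*(X 1*X 1)*X 2 + C c*C d*(X 0*X 0)*X 1*X 3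
      - C c*C d*(X 0*X 0)*X 1*X 2 + C b*C d*X 0*(X 2*X 2)*X 3 - C b*C d*X 0*X 1*(X 2*X 2)
      - C b*C d*(X 0*X 0)*X 2*X 3 + C b*C d*(X 0*X 0)*X 1*X 2 - C b*C c*X 0*X 2*(X 3*X 3)
      + C b*C c*X 0*X 1*(X 3*X 3) + C b*C c*(X 0*X 0)*X 2*X 3 - C b*C c*(X 0*X 0)*X 1*X 3
      - C a*C d*X 1*(X 2*X 2)*X 3 + C a*C d*(X 1*X 1)*X 2*X 3 + C a*C d*X 0*X 1*(X 2*X 2)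
      - C a*C d*X 0*(X 1*X 1)*X 2 + C a*C c*X 1*X 2*(X 3*X 3) - C a*C c*(X 1*X 1)*X 2*X 3
      - C a*C c*X 0*X 1*(X 3*X 3) + C a*C c*X 0*(X 1*X 1)*X 3 - C a*C b*X 1*X 2*(X 3*X 3)
      + C a*C b*X 1*(X 2*X 2)*X 3 + C a*C b*X 0*X 2*(X 3*X 3) - C a*C b*X 0*(X 2*X 2)*X 3 := by
  unfold weddlePoly
  simp only [Matrix.det_succ_row_zero, Fin.sum_univ_succ, Matrix.det_fin_zero,
    Matrix.submatrix_apply, Fin.sum_univ_zero, Matrix.submatrix_submatrix]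
  simp only [Fin.succAbove, Fin.castSucc, Fin.castAdd, Fin.castLE, Fin.lt_def, Fin.succ,
    Fin.isValue, Matrix.cons_val', Matrix.cons_val_zero, Matrix.cons_val_one, Matrix.head_cons,
    Matrix.head_fin_const, Matrix.empty_val', Matrix.cons_val_fin_one, Matrix.vecHead,
    Matrix.vecTail, Function.comp]
  norm_num [Matrix.cons_val_zero, Matrix.cons_val_one, Matrix.head_cons, Fin.ext_iff]
  ring

theorem weddle_extra_singular_point_char_two {R : Type*} [CommRing R]
    (h2 : (2 : R) = 0) (s t u v : R) :
    eval ![s, t, u, v] (weddlePoly R (s^2) (t^2) (u^2) (v^2)) = 0 ∧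
    ∀ k : Fin 4, eval ![s, t, u, v] (pderiv k (weddlePoly R (s^2) (t^2) (u^2) (v^2))) = 0 := by
  rw [weddlePoly_eq]
  constructor
  · simp only [map_add, map_sub, map_neg, map_mul, eval_C, eval_X,
      Matrix.cons_val_zero, Matrix.cons_val_one, Matrix.head_cons,
      Matrix.cons_val_two, Matrix.tail_cons, Matrix.cons_val_three]
    ring
  · intro k
    have L : ∀ (i : Fin 4) (p q : MvPolynomial (Fin 4) R),
        pderiv i (p * q) = p * pderiv i q + q * pderiv i p := fun i p q => by
      rw [Derivation.leibniz, smul_eq_mul, smul_eq_mul]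
    fin_cases k
    · simp only [map_add, map_sub, map_neg, L, pderiv_C, pderiv_X, Pi.single_apply,
        Fin.reduceEq, Fin.reduceFinMk, Fin.isValue, reduceIte, mul_zero, zero_mul, mul_one, one_mul,
        add_zero, zero_add, map_zero, map_one,
        map_mul, eval_C, eval_X, Matrix.cons_val_zero, Matrix.cons_val_one,
        Matrix.head_cons, Matrix.cons_val_two, Matrix.tail_cons, Matrix.cons_val_three]
      linear_combination (s*t*u^2*v^3 - s*t*u^3*v^2 - s*t^2*u*v^3 + s*t^2*u^3*v
        + s*t^3*u*v^2 - s*t^3*u^2*v) * h2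
    · simp only [map_add, map_sub, map_neg, L, pderiv_C, pderiv_X, Pi.single_apply,
        Fin.reduceEq, Fin.reduceFinMk, Fin.isValue, reduceIte, mul_zero, zero_mul, mul_one, one_mul,
        add_zero, zero_add, map_zero, map_one,
        map_mul, eval_C, eval_X, Matrix.cons_val_zero, Matrix.cons_val_one,
        Matrix.head_cons, Matrix.cons_val_two, Matrix.tail_cons, Matrix.cons_val_three]
      linear_combination (-(s*t*u^2*v^3) + s*t*u^3*v^2 + s^2*t*u*v^3 - s^2*t*u^3*v
        - s^3*t*u*v^2 + s^3*t*u^2*v) * h2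
    · simp only [map_add, map_sub, map_neg, L, pderiv_C, pderiv_X, Pi.single_apply,
        Fin.reduceEq, Fin.reduceFinMk, Fin.isValue, reduceIte, mul_zero, zero_mul, mul_one, one_mul,
        add_zero, zero_add, map_zero, map_one,
        map_mul, eval_C, eval_X, Matrix.cons_val_zero, Matrix.cons_val_one,
        Matrix.head_cons, Matrix.cons_val_two, Matrix.tail_cons, Matrix.cons_val_three]
      linear_combination (s*t^2*u*v^3 - s*t^3*u*v^2 - s^2*t*u*v^3 + s^2*t^3*u*v
        + s^3*t*u*v^2 - s^3*t^2*u*v) * h2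
    · simp only [map_add, map_sub, map_neg, L, pderiv_C, pderiv_X, Pi.single_apply,
        Fin.reduceEq, Fin.reduceFinMk, Fin.isValue, reduceIte, mul_zero, zero_mul, mul_one, one_mul,
        add_zero, zero_add, map_zero, map_one,
        map_mul, eval_C, eval_X, Matrix.cons_val_zero, Matrix.cons_val_one,
        Matrix.head_cons, Matrix.cons_val_two, Matrix.tail_cons, Matrix.cons_val_three]
      linear_combination (-(s*t^2*u^3*v) + s*t^3*u^2*v + s^2*t*u^3*v - s^2*t^3*u*v
        - s^3*t*u^2*v + s^3*t^2*u*v) * h2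
end

section
/- Let R be a commutative ring, a,b,c,d ∈ R, and F(x,y,z,w) the determinant of the 4×4 matrix with rows (a·y·z·w, x, 1, a), (b·x·z·w, y, 1, b), (c·x·y·w, z, 1, c), (d·x·y·z, w, 1, d). Then for all units x,y,z,w ∈ R×: (x·y·z·w)² · F(a·x⁻¹, b·y⁻¹, c·z⁻¹, d·w⁻¹) = −a·b·c·d · F(x,y,z,w). -/
/-- The Hutchinson determinantal equation of the Weddle quartic surface. -/
def weddle {R : Type*} [CommRing R] (a b c d x y z w : R) : R :=
  Matrix.det !![a*y*z*w, x, 1, a;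
                b*x*z*w, y, 1, b;
                c*x*y*w, z, 1, c;
                d*x*y*z, w, 1, d]

/-!
`F(x, y, z, w)` is the determinant of the matrix with rows `(aᵢ, xᵢ², xᵢ, aᵢ xᵢ)`: multiplying row `i`
of either matrix by `xᵢ` gives the same determinant, so this is a polynomial identity. In that form
the involution is transparent: if `xᵢ xᵢ' = aᵢ`, then row `i` of the transformed matrix times `xᵢ²`
is `aᵢ • (xᵢ², aᵢ, xᵢ, aᵢ xᵢ)`, i.e. `aᵢ` times the original row with its first two entries swapped.
-/

open Matrix

namespace Weddle

variable {R : Type*} [CommRing R]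

def quarticMatrix (a x : Fin 4 → R) : Matrix (Fin 4) (Fin 4) R :=
  of fun i => ![a i, x i ^ 2, x i, a i * x i]

theorem weddle_eq_det_quarticMatrix (a b c d x y z w : R) :
    weddle a b c d x y z w = (quarticMatrix ![a, b, c, d] ![x, y, z, w]).det := by
  rw [weddle, det_succ_row_zero, det_succ_row_zero]
  simp only [Fin.sum_univ_succ, det_fin_three]
  simp [quarticMatrix, Fin.succAbove]
  ring

theorem quarticMatrix_submatrix_swap (a x : Fin 4 → R) :
    (quarticMatrix a x).submatrix id (Equiv.swap 0 1) =
      of fun i => ![x i ^ 2, a i, x i, a i * x i] := by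
  ext i j
  fin_cases j <;> rfl

theorem det_quarticMatrix_of_mul_eq (a x x' : Fin 4 → R) (hx : ∀ i, x i * x' i = a i) :
    (∏ i, x i ^ 2) * (quarticMatrix a x').det = -(∏ i, a i) * (quarticMatrix a x).det := by
  have hrow : (of fun i j => x i ^ 2 * quarticMatrix a x' i j) =
      of fun i j => a i * (quarticMatrix a x).submatrix id (Equiv.swap 0 1) i j := by
    rw [quarticMatrix_submatrix_swap]
    ext i j
    fin_cases j <;> simp [quarticMatrix, ← hx i] <;> ring
  rw [← det_mul_column, hrow, det_mul_column, det_permute', Equiv.Perm.sign_swap (by decide)]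
  simp

end Weddle

theorem weddle_hutchinson_involution {R : Type*} [CommRing R] (a b c d : R)
    (x y z w : Rˣ) :
    ((x : R) * y * z * w)^2 *
      weddle a b c d (a * (x⁻¹ : Rˣ)) (b * (y⁻¹ : Rˣ)) (c * (z⁻¹ : Rˣ)) (d * (w⁻¹ : Rˣ))
      = -(a * b * c * d) * weddle a b c d x y z w := by
  have hinv : ∀ (u : Rˣ) (e : R), (u : R) * (e * (u⁻¹ : Rˣ)) = e := fun u e => by
    rw [mul_left_comm, Units.mul_inv, mul_one]
  have key := Weddle.det_quarticMatrix_of_mul_eq ![a, b, c, d] ![(x : R), y, z, w]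
    ![a * (x⁻¹ : Rˣ), b * (y⁻¹ : Rˣ), c * (z⁻¹ : Rˣ), d * (w⁻¹ : Rˣ)]
    (fun i => by fin_cases i <;> exact hinv _ _)
  rw [Weddle.weddle_eq_det_quarticMatrix, Weddle.weddle_eq_det_quarticMatrix]
  simpa only [Fin.prod_univ_four, cons_val, mul_pow, ← mul_assoc] using key
end

section
/- Let k be a field of characteristic 2, a,b,c,d ∈ k, and F(x,y,z,w) the determinant of the 4×4 matrix with rows (a·y·z·w, x, 1, a), (b·x·z·w, y, 1, b), (c·x·y·w, z, 1, c), (d·x·y·z, w, 1, d). Define X(s,t) = ( a(s+tb)(s+tc)(s+td), b(s+ta)(s+tc)(s+td), c(s+ta)(s+tb)(s+td), d(s+ta)(s+tb)(s+tc) ). Then F(X(s,t)) = 0 identically as a polynomial in s,t. -/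
open MvPolynomial

/-! On the curve `xᵢ = aᵢ ∏_{j ≠ i} (s + t aⱼ)` one has `aᵢ ∏_{j ≠ i} xⱼ = (abcd) P² (s + t aᵢ)` with
`P = ∏ⱼ (s + t aⱼ)`: each factor `s + t aⱼ`, `j ≠ i`, occurs twice among the three `xⱼ`, and
`s + t aᵢ` three times. So the first column of the Weddle matrix is a combination of the constant
column and the column `(a, b, c, d)`, and the determinant vanishes identically. -/

theorem Matrix.det_eq_zero_of_col_eq_add {n R : Type*} [DecidableEq n] [Fintype n] [CommRing R]
    {M : Matrix n n R} {i j k : n} (hij : i ≠ j) (hik : i ≠ k) (u v : R)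
    (hM : ∀ r, M r i = u * M r j + v * M r k) : M.det = 0 := by
  have hcol : M = M.updateCol i (u • (M · j) + v • (M · k)) := by
    ext r l
    rcases eq_or_ne l i with rfl | hl
    · simp [hM]
    · simp [Matrix.updateCol_ne hl]
  have hzero (m : n) (hm : i ≠ m) : (M.updateCol i (M · m)).det = 0 :=
    Matrix.det_zero_of_column_eq hm fun r => by simp [Matrix.updateCol_ne hm.symm]
  rw [hcol, Matrix.det_updateCol_add, Matrix.det_updateCol_smul, Matrix.det_updateCol_smul,
    hzero j hij, hzero k hik, mul_zero, mul_zero, add_zero]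

theorem weddle_eq_zero_of_col_eq_add {R : Type*} [CommRing R] {a b c d x y z w : R} (m s t : R)
    (ha : a*y*z*w = m * (s + t*a)) (hb : b*x*z*w = m * (s + t*b))
    (hc : c*x*y*w = m * (s + t*c)) (hd : d*x*y*z = m * (s + t*d)) :
    weddle a b c d x y z w = 0 :=
  Matrix.det_eq_zero_of_col_eq_add (i := 0) (j := 2) (k := 3) (by decide) (by decide) (m * s) (m * t)
    fun r => by fin_cases r <;> simp [ha, hb, hc, hd] <;> ring

theorem weddle_twistedCubic_eq_zero {R : Type*} [CommRing R] (a b c d s t : R) :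
    weddle a b c d
      (a * (s + t * b) * (s + t * c) * (s + t * d))
      (b * (s + t * a) * (s + t * c) * (s + t * d))
      (c * (s + t * a) * (s + t * b) * (s + t * d))
      (d * (s + t * a) * (s + t * b) * (s + t * c)) = 0 := by
  apply weddle_eq_zero_of_col_eq_add
    (a * b * c * d * ((s + t * a) * (s + t * b) * (s + t * c) * (s + t * d)) ^ 2) s t <;> ring

theorem weddle_contains_twisted_cubic_general {k : Type*} [Field k] (a b c d : k) :
    (weddle (C a) (C b) (C c) (C d)
      (C a * (X 0 + X 1 * C b) * (X 0 + X 1 * C c) * (X 0 + X 1 * C d))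
      (C b * (X 0 + X 1 * C a) * (X 0 + X 1 * C c) * (X 0 + X 1 * C d))
      (C c * (X 0 + X 1 * C a) * (X 0 + X 1 * C b) * (X 0 + X 1 * C d))
      (C d * (X 0 + X 1 * C a) * (X 0 + X 1 * C b) * (X 0 + X 1 * C c))
      : MvPolynomial (Fin 2) k) = 0 :=
  weddle_twistedCubic_eq_zero _ _ _ _ _ _

theorem weddle_contains_twisted_cubic {k : Type*} [Field k] [CharP k 2] (a b c d : k) :
    (weddle (C a) (C b) (C c) (C d)
      (C a * (X 0 + X 1 * C b) * (X 0 + X 1 * C c) * (X 0 + X 1 * C d))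
      (C b * (X 0 + X 1 * C a) * (X 0 + X 1 * C c) * (X 0 + X 1 * C d))
      (C c * (X 0 + X 1 * C a) * (X 0 + X 1 * C b) * (X 0 + X 1 * C d))
      (C d * (X 0 + X 1 * C a) * (X 0 + X 1 * C b) * (X 0 + X 1 * C c))
      : MvPolynomial (Fin 2) k) = 0 :=
  weddle_contains_twisted_cubic_general a b c d
end

section
/- Let k be a field of characteristic 2 and F(x0,...,x4) = x1x2x4 + x0x3x4 + x1x2x3 + x0x1x3 + x0x2x3 + x0²x3 ∈ k[x0,...,x4]. Each of the following five linear substitutions preserves F, i.e. F∘σ = F as polynomials: σ1: (x0,...,x4) ↦ (x0, x0+x1, x2, x2+x3, x0+x2+x4); σ2: (x0,...,x4) ↦ (x0+x1, x1, x0+x1+x4, x1+x3, x0+x2); σ3: (x0,...,x4) ↦ (x2, x3, x0, x1, x0+x2+x4); σ4: (x0,...,x4) ↦ (x0, x1, x0+x2, x1+x3, x0+x1+x4); σ5: (x0,...,x4) ↦ (x2, x0+x1+x2+x4, x0, x3+x4, x4). -/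
open MvPolynomial

/-- The equation of the Segre cubic in characteristic 2. -/
noncomputable def segreCubic2 (k : Type*) [Field k] : MvPolynomial (Fin 5) k :=
  X 1 * X 2 * X 4 + X 0 * X 3 * X 4 + X 1 * X 2 * X 3
    + X 0 * X 1 * X 3 + X 0 * X 2 * X 3 + X 0 ^ 2 * X 3

theorem segre_cubic_s6_symmetry {k : Type*} [Field k] [CharP k 2] :
    aeval (![X 0, X 0 + X 1, X 2, X 2 + X 3, X 0 + X 2 + X 4] :
      Fin 5 → MvPolynomial (Fin 5) k) (segreCubic2 k) = segreCubic2 k ∧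
    aeval (![X 0 + X 1, X 1, X 0 + X 1 + X 4, X 1 + X 3, X 0 + X 2] :
      Fin 5 → MvPolynomial (Fin 5) k) (segreCubic2 k) = segreCubic2 k ∧
    aeval (![X 2, X 3, X 0, X 1, X 0 + X 2 + X 4] :
      Fin 5 → MvPolynomial (Fin 5) k) (segreCubic2 k) = segreCubic2 k ∧
    aeval (![X 0, X 1, X 0 + X 2, X 1 + X 3, X 0 + X 1 + X 4] :
      Fin 5 → MvPolynomial (Fin 5) k) (segreCubic2 k) = segreCubic2 k ∧
    aeval (![X 2, X 0 + X 1 + X 2 + X 4, X 0, X 3 + X 4, X 4] :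
      Fin 5 → MvPolynomial (Fin 5) k) (segreCubic2 k) = segreCubic2 k := by
  have h2 : (2 : MvPolynomial (Fin 5) k) = 0 := by
    exact_mod_cast CharP.cast_eq_zero (MvPolynomial (Fin 5) k) 2
  have h3 : (3 : MvPolynomial (Fin 5) k) = 1 := by linear_combination h2
  have h4 : (4 : MvPolynomial (Fin 5) k) = 0 := by linear_combination 2 * h2
  have h7 : (7 : MvPolynomial (Fin 5) k) = 1 := by linear_combination 3 * h2
  have h8 : (8 : MvPolynomial (Fin 5) k) = 0 := by linear_combination 4 * h2
  refine ⟨?_, ?_, ?_, ?_, ?_⟩ <;>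
  · simp only [segreCubic2, map_add, map_mul, map_pow, aeval_X,
      Matrix.cons_val_zero, Matrix.cons_val_one, Matrix.head_cons,
      Matrix.cons_val_two, Matrix.tail_cons, Matrix.cons_val_three,
      Matrix.cons_val_four, Matrix.cons_val_succ]
    ring_nf
    simp only [h2, h3, h4, h7, h8, mul_zero, mul_one, add_zero, zero_add]
end

section
/- Let k be a field of characteristic 2, a,b,c,d ∈ k, and let F(x,y,z,w) be the determinant of the 4×4 matrix with rows (a·y·z·w, x, 1, a), (b·x·z·w, y, 1, b), (c·x·y·w, z, 1, c), (d·x·y·z, w, 1, d). Then for all s,t ∈ k, F(s+ta, s+tb, s+tc, s+td) = 0; i.e., F vanishes identically on the line through (1,1,1,1) and (a,b,c,d), and moreover under the substitution x ↦ a/x, y ↦ b/y, z ↦ c/z, w ↦ d/w (for x,y,z,w ≠ 0) the image of any point of this line with nonzero coordinates again satisfies F = 0. -/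
theorem Matrix.det_eq_zero_of_col_eq_mul_add_mul {n R : Type*} [DecidableEq n] [Fintype n]
    [CommRing R] (A : Matrix n n R) {i j k : n} (hij : i ≠ j) (hik : i ≠ k) (s t : R)
    (h : ∀ l, A l i = s * A l j + t * A l k) : A.det = 0 := by
  rw [← det_updateCol_add_smul_self A hij (-s), ← det_updateCol_add_smul_self _ hik (-t)]
  refine det_eq_zero_of_column_eq_zero i fun l => ?_
  simp only [updateCol_self, updateCol_ne hik.symm, h, smul_eq_mul]
  ring

theorem weddle_line_eq_zero {R : Type*} [CommRing R] (a b c d s t : R) :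
    weddle a b c d (s + t*a) (s + t*b) (s + t*c) (s + t*d) = 0 :=
  Matrix.det_eq_zero_of_col_eq_mul_add_mul _ (i := 1) (j := 2) (k := 3) (by decide) (by decide) s t
    fun l => by fin_cases l <;> simp

/- Scaling row `i` by the `i`-th coordinate turns both Weddle matrices into the matrix with rows
`(xᵢ², aᵢ, xᵢ, aᵢxᵢ)`, up to swapping the first two columns and scaling the first one. -/
theorem weddle_cremona {k : Type*} [Field k] (a b c d x y z w : k)
    (hx : x ≠ 0) (hy : y ≠ 0) (hz : z ≠ 0) (hw : w ≠ 0) :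
    weddle a b c d (a / x) (b / y) (c / z) (d / w) =
      -(a * b * c * d) / (x * y * z * w) ^ 2 * weddle a b c d x y z w := by
  rw [weddle, weddle, Matrix.det_succ_row_zero, Matrix.det_succ_row_zero]
  simp [Fin.sum_univ_four, Matrix.det_fin_three, Fin.succAbove]
  field_simp
  ring

theorem weddle_line56_and_its_cremona_image_general {k : Type*} [Field k]
    (a b c d : k) :
    (∀ s t : k, weddle a b c d (s + t*a) (s + t*b) (s + t*c) (s + t*d) = 0) ∧
    (∀ s t : k, s + t*a ≠ 0 → s + t*b ≠ 0 → s + t*c ≠ 0 → s + t*d ≠ 0 →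
      weddle a b c d (a / (s + t*a)) (b / (s + t*b)) (c / (s + t*c)) (d / (s + t*d)) = 0) := by
  refine ⟨weddle_line_eq_zero a b c d, fun s t hx hy hz hw => ?_⟩
  rw [weddle_cremona a b c d _ _ _ _ hx hy hz hw, weddle_line_eq_zero, mul_zero]

theorem weddle_line56_and_its_cremona_image {k : Type*} [Field k] [CharP k 2]
    (a b c d : k) :
    (∀ s t : k, weddle a b c d (s + t*a) (s + t*b) (s + t*c) (s + t*d) = 0) ∧
    (∀ s t : k, s + t*a ≠ 0 → s + t*b ≠ 0 → s + t*c ≠ 0 → s + t*d ≠ 0 →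
      weddle a b c d (a / (s + t*a)) (b / (s + t*b)) (c / (s + t*c)) (d / (s + t*d)) = 0) :=
  weddle_line56_and_its_cremona_image_general a b c d
end
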